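/- Let G be a finite group with G/Z(G) isomorphic to the Suzuki group Sz(2) = ⟨a, b : a^5 = b^4 = 1, b^{-1}ab = a^2⟩ of order 20. Then G is an AC-group and its commuting graph is isomorphic to K_{4|Z(G)|} ⊔ 5·K_{3|Z(G)|}. -/

import Mathlib

open Polynomial

/-- The commuting graph of a group: vertices are non-central elements,
adjacent iff distinct and commuting. -/
def commGraph (G : Type*) [Group G] : SimpleGraph {x : G // x ∉ Subgroup.center G} where
  Adj x y := x ≠ y ∧ (x : G) * y = y * x
  symm := ⟨by rintro x y ⟨h1, h2⟩; exact ⟨h1.symm, h2.symm⟩⟩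
  loopless := ⟨by rintro x ⟨h, _⟩; exact h rfl⟩

/-- The characteristic polynomial (over ℝ) of the adjacency matrix of the
commuting graph of a finite group. -/
noncomputable def commCharpoly (G : Type*) [Group G] [Finite G] : Polynomial ℝ := by
  classical
  have : Fintype G := Fintype.ofFinite G
  exact (SimpleGraph.adjMatrix ℝ (commGraph G)).charpoly

/-- The disjoint union of `k` copies of the complete graph on `m` vertices. -/
def completeUnion (k m : ℕ) : SimpleGraph (Fin k × Fin m) where
  Adj x y := x ≠ y ∧ x.1 = y.1
  symm := ⟨by rintro x y ⟨h1, h2⟩; exact ⟨h1.symm, h2.symm⟩⟩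
  loopless := ⟨by rintro x ⟨h, _⟩; exact h rfl⟩

/-- The relators of the presentation `⟨a, b : a⁵ = b⁴ = 1, b⁻¹ a b = a²⟩` of the
Suzuki group `Sz(2)` of order 20. -/
def szRels : Set (FreeGroup (Fin 2)) :=
  {FreeGroup.of 0 ^ 5, FreeGroup.of 1 ^ 4,
    (FreeGroup.of 1)⁻¹ * FreeGroup.of 0 * FreeGroup.of 1 * (FreeGroup.of 0 ^ 2)⁻¹}

/-!
`Sz(2)` acts faithfully on `ZMod 5` through `a ↦ (x ↦ x + 1)`, `b ↦ (x ↦ 3 * x)`, as the affine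
group `AGL(1, 5)`. A non-identity affine map is either a translation or has exactly one fixed
point; two non-identity elements commute iff they have the same fixed point (or none), and of two
commuting elements one is a power of the other. The last fact lifts to `G`: if `x̄ = ȳ ^ k` modulo
the centre then `x = y ^ k * z` with `z` central, so `x` and `y` commute iff `x̄` and `ȳ` do.
Commuting is therefore an equivalence relation on `G \ Z(G)`; its classes are the preimages of
the non-trivial translations (`4 |Z(G)|` elements) and of the five point stabilisers minus the
identity (`3 |Z(G)|` elements each).
-/

open Subgroup

section Graph

variable {α β ι : Type*}

theorem nonempty_iso_of_adj_iff_of_card_fiber_eq [Finite α] [Finite β]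
    {G : SimpleGraph α} {H : SimpleGraph β} (f : α → ι) (g : β → ι)
    (hG : ∀ u v, G.Adj u v ↔ u ≠ v ∧ f u = f v) (hH : ∀ u v, H.Adj u v ↔ u ≠ v ∧ g u = g v)
    (hfg : ∀ i, Nat.card {u // f u = i} = Nat.card {v // g v = i}) : Nonempty (G ≃g H) := by
  have F : ∀ i, {u // f u = i} ≃ {v // g v = i} := fun i =>
    Classical.choice (Finite.card_eq.mp (hfg i))
  let E : α ≃ β := (Equiv.sigmaFiberEquiv f).symm.trans
    ((Equiv.sigmaCongrRight F).trans (Equiv.sigmaFiberEquiv g))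
  have hE : ∀ u, g (E u) = f u := fun u => (F (f u) ⟨u, rfl⟩).2
  exact ⟨⟨E, fun {u v} => by rw [hG, hH, hE, hE, E.injective.ne_iff]⟩⟩

def cliqueIndex (n k m : ℕ) : Fin n ⊕ Fin k × Fin m → Option (Fin k) :=
  Sum.elim (fun _ => none) (fun p => some p.1)

theorem top_sum_completeUnion_adj_iff (n k m : ℕ) (w w' : Fin n ⊕ Fin k × Fin m) :
    ((⊤ : SimpleGraph (Fin n)) ⊕g completeUnion k m).Adj w w' ↔
      w ≠ w' ∧ cliqueIndex n k m w = cliqueIndex n k m w' := by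
  rcases w with a | p <;> rcases w' with b | q <;>
    simp [SimpleGraph.sum, completeUnion, cliqueIndex]

theorem card_cliqueIndex_fiber (n k m : ℕ) (i : Option (Fin k)) :
    Nat.card {w // cliqueIndex n k m w = i} = i.elim n fun _ => m := by
  rw [Nat.card_congr (Equiv.subtypeSum (p := (cliqueIndex n k m · = i))), Nat.card_sum]
  cases i with
  | none => simp [cliqueIndex]
  | some j =>
    simp [cliqueIndex, Fintype.card_congr (Equiv.prodSubtypeFstEquivSubtypeProd (p := (· = j)))]

end Graph

section CenterQuotient

variable {G Q ι : Type*} [Group G] [Group Q]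

theorem commute_of_mk_eq_pow {x y : G} {k : ℕ}
    (h : (x : G ⧸ center G) = (y : G ⧸ center G) ^ k) : Commute x y := by
  rw [← QuotientGroup.mk_pow, QuotientGroup.eq] at h
  have hx : x = y ^ k * (x⁻¹ * y ^ k)⁻¹ := by group
  rw [hx]
  have hz : Commute (x⁻¹ * y ^ k) y := (mem_center_iff.mp h y).symm
  exact ((Commute.refl y).pow_left k).mul_left hz.inv_left

theorem commute_iff_of_quotientCenterEquiv (e : G ⧸ center G ≃* Q)
    (hQ : ∀ s t : Q, Commute s t → ∃ k : ℕ, t = s ^ k ∨ s = t ^ k) (x y : G) :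
    Commute x y ↔ Commute (e x) (e y) := by
  refine ⟨fun h => (h.map (QuotientGroup.mk' _)).map e, fun h => ?_⟩
  obtain ⟨k, hk | hk⟩ := hQ _ _ h
  · exact (commute_of_mk_eq_pow (e.injective (by rw [hk, map_pow]))).symm
  · exact commute_of_mk_eq_pow (e.injective (by rw [hk, map_pow]))

theorem card_nonCentral_fiber [Finite G] (e : G ⧸ center G ≃* Q) (f : Q → ι) (i : ι) :
    Nat.card {x : {x : G // x ∉ center G} // f (e x) = i} =
      Nat.card (center G) * Nat.card {s : Q // s ≠ 1 ∧ f s = i} := by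
  let S : Set (G ⧸ center G) := {q | q ≠ 1 ∧ f (e q) = i}
  have hS : {s : Q // s ≠ 1 ∧ f s = i} ≃ S :=
    e.symm.toEquiv.subtypeEquiv fun s => by simp [S]
  have hpre : {x : {x : G // x ∉ center G} // f (e x) = i} ≃ QuotientGroup.mk ⁻¹' S :=
    (Equiv.subtypeSubtypeEquivSubtypeInter (· ∉ center G)
      fun x : G => f (e (x : G ⧸ center G)) = i).trans
      (Equiv.subtypeEquivRight fun x => by simp [S, QuotientGroup.eq_one_iff])
  rw [Nat.card_congr hpre, QuotientGroup.card_preimage_mk, Nat.card_congr hS]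

theorem mul_comm_of_mem_centralizer_of_commute_iff (ℓ : G → ι)
    (hℓ : ∀ x y, x ∉ center G → y ∉ center G → (Commute x y ↔ ℓ x = ℓ y))
    {x : G} (hx : x ∉ center G) {y z : G} (hy : y ∈ centralizer {x}) (hz : z ∈ centralizer {x}) :
    y * z = z * y := by
  by_cases hyZ : y ∈ center G
  · exact (mem_center_iff.mp hyZ z).symm
  by_cases hzZ : z ∈ center G
  · exact mem_center_iff.mp hzZ y
  have hxy : ℓ x = ℓ y := (hℓ x y hx hyZ).mp (mem_centralizer_singleton_iff.mp hy).symm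
  have hxz : ℓ x = ℓ z := (hℓ x z hx hzZ).mp (mem_centralizer_singleton_iff.mp hz).symm
  exact (hℓ y z hyZ hzZ).mpr (hxy.symm.trans hxz)

end CenterQuotient

namespace Sz2

abbrev P := PresentedGroup szRels

def a : P := PresentedGroup.of 0

def b : P := PresentedGroup.of 1

theorem a_pow_five : a ^ 5 = 1 :=
  (map_pow _ _ 5).symm.trans (PresentedGroup.one_of_mem (.inl rfl))

theorem b_pow_four : b ^ 4 = 1 :=
  (map_pow _ _ 4).symm.trans (PresentedGroup.one_of_mem (.inr (.inl rfl)))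

theorem semiconjBy_b_inv_a : SemiconjBy b⁻¹ a (a ^ 2) := by
  have h := PresentedGroup.one_of_mem (rels := szRels) (.inr (.inr rfl))
  simp only [map_mul, map_inv, map_pow] at h
  exact eq_mul_inv_iff_mul_eq.mpr (mul_inv_eq_one.mp h)

theorem semiconjBy_b_a : SemiconjBy b a (a ^ 3) := by
  have h := semiconjBy_b_inv_a.pow_right 3
  have ha : (a ^ 2) ^ 3 = a := by
    rw [← pow_mul, show 2 * 3 = 5 + 1 from rfl, pow_succ, a_pow_five, one_mul]
  rw [ha] at h
  exact SemiconjBy.inv_symm_left_iff.mp h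

theorem a_inv : a⁻¹ = a ^ 4 := inv_eq_of_mul_eq_one_right (by rw [← pow_succ', a_pow_five])

theorem b_inv : b⁻¹ = b ^ 3 := inv_eq_of_mul_eq_one_right (by rw [← pow_succ', b_pow_four])

theorem closure_a_b : Subgroup.closure {a, b} = ⊤ := by
  rw [← PresentedGroup.closure_range_of]
  congr
  ext
  simp [Fin.exists_fin_two, a, b, eq_comm]

theorem exists_pow_mul_pow_eq (g : P) : ∃ i j : ℕ, a ^ i * b ^ j = g := by
  have hg : g ∈ Subgroup.closure {a, b} := by simp [closure_a_b]
  induction hg using Subgroup.closure_induction_left with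
  | one => exact ⟨0, 0, by simp⟩
  | mul_left x hx y _ ih =>
    obtain ⟨i, j, rfl⟩ := ih
    rcases hx with rfl | rfl
    · exact ⟨i + 1, j, by rw [pow_succ', mul_assoc]⟩
    · exact ⟨3 * i, j + 1, by
        rw [← mul_assoc, (semiconjBy_b_a.pow_right i).eq, pow_succ', ← pow_mul, mul_assoc]⟩
  | inv_mul_cancel x hx y _ ih =>
    obtain ⟨i, j, rfl⟩ := ih
    rcases hx with rfl | rfl
    · exact ⟨4 + i, j, by rw [a_inv, pow_add, mul_assoc]⟩
    · exact ⟨2 * i, 3 + j, by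
        rw [← mul_assoc, (semiconjBy_b_inv_a.pow_right i).eq, b_inv, pow_add, ← pow_mul,
          mul_assoc]⟩

def translation : Equiv.Perm (ZMod 5) := ⟨(· + 1), (· - 1), by decide, by decide⟩

def dilation : Equiv.Perm (ZMod 5) := ⟨(3 * ·), (2 * ·), by decide, by decide⟩

def affineMap (p : Fin 5 × Fin 4) : Equiv.Perm (ZMod 5) :=
  translation ^ (p.1 : ℕ) * dilation ^ (p.2 : ℕ)

-- `none` exactly for the fixed-point-free maps, i.e. the non-trivial translations.
def fixedPoint (σ : Equiv.Perm (ZMod 5)) : Option (ZMod 5) := Fin.find? fun x => σ x == x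

theorem affineMap_injective : Function.Injective affineMap := by decide

theorem exists_affineMap_pow_eq_of_commute : ∀ p q,
    affineMap p * affineMap q = affineMap q * affineMap p →
      ∃ k : Fin 5, affineMap q = affineMap p ^ (k : ℕ) ∨ affineMap p = affineMap q ^ (k : ℕ) := by
  decide

theorem affineMap_commute_iff : ∀ p q, affineMap p ≠ 1 → affineMap q ≠ 1 →
    (affineMap p * affineMap q = affineMap q * affineMap p ↔
      fixedPoint (affineMap p) = fixedPoint (affineMap q)) := by
  decide

theorem card_affineMap_fixedPoint_eq : ∀ i : Option (ZMod 5),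
    Fintype.card {p // affineMap p ≠ 1 ∧ fixedPoint (affineMap p) = i} = i.elim 4 fun _ => 3 := by
  decide

noncomputable def toPerm : P →* Equiv.Perm (ZMod 5) :=
  PresentedGroup.toGroup (f := ![translation, dilation]) <| by
    rintro r (rfl | rfl | rfl) <;>
      simp only [map_mul, map_inv, map_pow, FreeGroup.lift_apply_of] <;> decide

theorem toPerm_a : toPerm a = translation := PresentedGroup.toGroup.of _

theorem toPerm_b : toPerm b = dilation := PresentedGroup.toGroup.of _

def normalForm (p : Fin 5 × Fin 4) : P := a ^ (p.1 : ℕ) * b ^ (p.2 : ℕ)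

theorem toPerm_normalForm (p : Fin 5 × Fin 4) : toPerm (normalForm p) = affineMap p := by
  simp [normalForm, affineMap, toPerm_a, toPerm_b]

theorem normalForm_surjective : Function.Surjective normalForm := by
  intro g
  obtain ⟨i, j, rfl⟩ := exists_pow_mul_pow_eq g
  refine ⟨(⟨i % 5, Nat.mod_lt _ (by norm_num)⟩, ⟨j % 4, Nat.mod_lt _ (by norm_num)⟩), ?_⟩
  rw [normalForm, ← pow_eq_pow_mod i a_pow_five, ← pow_eq_pow_mod j b_pow_four]

theorem toPerm_injective : Function.Injective toPerm := by
  intro s t hst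
  obtain ⟨p, rfl⟩ := normalForm_surjective s
  obtain ⟨q, rfl⟩ := normalForm_surjective t
  rw [toPerm_normalForm, toPerm_normalForm] at hst
  rw [affineMap_injective hst]

theorem exists_pow_eq_of_commute {s t : P} (h : Commute s t) : ∃ k : ℕ, t = s ^ k ∨ s = t ^ k := by
  obtain ⟨p, rfl⟩ := normalForm_surjective s
  obtain ⟨q, rfl⟩ := normalForm_surjective t
  have hpq := h.map toPerm
  rw [toPerm_normalForm, toPerm_normalForm] at hpq
  obtain ⟨k, hk⟩ := exists_affineMap_pow_eq_of_commute p q hpq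
  refine ⟨k, hk.imp (fun hk => toPerm_injective ?_) (fun hk => toPerm_injective ?_)⟩ <;>
    simpa [toPerm_normalForm] using hk

theorem commute_iff_fixedPoint_eq {s t : P} (hs : s ≠ 1) (ht : t ≠ 1) :
    Commute s t ↔ fixedPoint (toPerm s) = fixedPoint (toPerm t) := by
  rw [← commute_map_iff toPerm_injective]
  obtain ⟨p, rfl⟩ := normalForm_surjective s
  obtain ⟨q, rfl⟩ := normalForm_surjective t
  rw [← (map_ne_one_iff toPerm toPerm_injective)] at hs ht
  simp only [toPerm_normalForm] at hs ht ⊢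
  exact affineMap_commute_iff p q hs ht

theorem card_fixedPoint_eq (i : Option (ZMod 5)) :
    Nat.card {s : P // s ≠ 1 ∧ fixedPoint (toPerm s) = i} = i.elim 4 fun _ => 3 := by
  have hbij : Function.Bijective normalForm :=
    ⟨fun p q h => affineMap_injective (by rw [← toPerm_normalForm, h, toPerm_normalForm]),
      normalForm_surjective⟩
  rw [← card_affineMap_fixedPoint_eq, ← Nat.card_eq_fintype_card]
  refine Nat.card_congr ((Equiv.ofBijective _ hbij).subtypeEquiv fun p => ?_).symm
  simp [← map_ne_one_iff toPerm toPerm_injective, toPerm_normalForm]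

end Sz2

/-- If `G` is a finite group with `G/Z(G) ≅ Sz(2)`, then `G` is an AC-group and its
commuting graph is isomorphic to `K_{4|Z(G)|} ⊔ 5·K_{3|Z(G)|}`. -/
theorem commGraph_of_quotient_center_iso_Sz2
    (G : Type*) [Group G] [Finite G]
    (h : Nonempty ((G ⧸ Subgroup.center G) ≃* PresentedGroup szRels)) :
    (∀ x : G, x ∉ Subgroup.center G →
      ∀ y ∈ Subgroup.centralizer ({x} : Set G), ∀ z ∈ Subgroup.centralizer ({x} : Set G),
        y * z = z * y) ∧
    Nonempty (commGraph G ≃g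
      ((⊤ : SimpleGraph (Fin (4 * Nat.card (Subgroup.center G))))
        ⊕g completeUnion 5 (3 * Nat.card (Subgroup.center G)))) := by
  obtain ⟨e⟩ := h
  let ℓ (x : G) : Option (ZMod 5) := Sz2.fixedPoint (Sz2.toPerm (e x))
  have hℓ (x y : G) (hx : x ∉ center G) (hy : y ∉ center G) : Commute x y ↔ ℓ x = ℓ y := by
    have he {z : G} (hz : z ∉ center G) : e z ≠ 1 :=
      (map_ne_one_iff e e.injective).mpr (mt (QuotientGroup.eq_one_iff z).mp hz)
    rw [commute_iff_of_quotientCenterEquiv e (fun _ _ => Sz2.exists_pow_eq_of_commute)]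
    exact Sz2.commute_iff_fixedPoint_eq (he hx) (he hy)
  refine ⟨fun x hx y hy z hz => mul_comm_of_mem_centralizer_of_commute_iff ℓ hℓ hx hy hz, ?_⟩
  refine nonempty_iso_of_adj_iff_of_card_fiber_eq (fun x => ℓ x) (cliqueIndex _ 5 _)
    (fun x y => and_congr_right fun _ => hℓ x y x.2 y.2) (top_sum_completeUnion_adj_iff _ 5 _)
    fun i => ?_
  rw [card_nonCentral_fiber e (fun s => Sz2.fixedPoint (Sz2.toPerm s)), Sz2.card_fixedPoint_eq]
  -- `ZMod 5` is `Fin 5` by definition, so both graphs are labelled by `Option (Fin 5)`.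
  refine Eq.trans ?_ (card_cliqueIndex_fiber _ _ _ i).symm
  cases i <;> exact mul_comm _ _
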